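/- Let x, y ∈ ℕ with x ≠ y, and let r ≥ 1 be the least positive integer with ⌊x/p^r⌋ = ⌊y/p^r⌋. Then for every λ ∈ ℂ not in the spectrum of D^α, the off-diagonal resolvent kernel is given by the convergent series R(λ, x, y) = − p^(−r) / (κ^(r−1) − λ) + (p − 1) · Σ_{k=r+1}^∞ p^(−k) / (κ^(k−1) − λ). -/

import Mathlib

/-- `kappa p α = p ^ (-α)`. -/
noncomputable def kappa (p : ℕ) (α : ℝ) : ℝ := (p : ℝ) ^ (-α)

/-- The p-adic interval of rank `r` containing `x`:
`{y : ℕ | ⌊y / p^r⌋ = ⌊x / p^r⌋} = {y | k p^r ≤ y < (k+1) p^r}` with `k = x / p^r`. -/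
def block (p r x : ℕ) : Finset ℕ :=
  Finset.Ico (x / p ^ r * p ^ r) ((x / p ^ r + 1) * p ^ r)

/-- `D` is the Dyson hierarchical Laplacian `D^α` on `ℓ²(ℕ; ℂ)`:
`(D f)(x) = Σ_{r ≥ 1} (1 - κ) κ^(r-1) (f x - p^(-r) Σ_{y ∈ I_r(x)} f y)`. -/
def IsDyson (p : ℕ) (α : ℝ)
    (D : lp (fun _ : ℕ => ℂ) 2 →L[ℂ] lp (fun _ : ℕ => ℂ) 2) : Prop :=
  ∀ (f : lp (fun _ : ℕ => ℂ) 2) (x : ℕ),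
    D f x = ∑' r : ℕ, (((1 - kappa p α) * kappa p α ^ r : ℝ) : ℂ) *
      (f x - ((p : ℂ) ^ (r + 1))⁻¹ * ∑ y ∈ block p (r + 1) x, f y)

section blocks
set_option linter.unusedSectionVars false
variable {p : ℕ} (hp : 2 ≤ p)
include hp

lemma ppow_pos (n : ℕ) : 0 < p ^ n := Nat.pow_pos (by omega)

lemma mem_block_iff {n w x : ℕ} : w ∈ block p n x ↔ w / p ^ n = x / p ^ n := by
  constructor
  · intro h
    rw [block, Finset.mem_Ico] at h
    exact Nat.div_eq_of_lt_le h.1 h.2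
  · intro h
    rw [block, Finset.mem_Ico, ← h]
    refine ⟨Nat.div_mul_le_self _ _, ?_⟩
    have h0 := ppow_pos hp n
    have : w / p ^ n < w / p ^ n + 1 := Nat.lt_succ_self _
    exact (Nat.div_lt_iff_lt_mul h0).mp this

lemma card_block (n x : ℕ) : (block p n x).card = p ^ n := by
  rw [block, Nat.card_Ico, Nat.succ_mul, Nat.add_sub_cancel_left]

lemma div_congr_of_le {n m w x : ℕ} (hnm : n ≤ m) (h : w / p ^ n = x / p ^ n) :
    w / p ^ m = x / p ^ m := by
  have hm : p ^ m = p ^ n * p ^ (m - n) := by rw [← pow_add]; congr 1; omega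
  rw [hm, ← Nat.div_div_eq_div_mul, ← Nat.div_div_eq_div_mul, h]

lemma self_mem_block (n x : ℕ) : x ∈ block p n x := (mem_block_iff hp).2 rfl

/-- sum over a rank-`n` block of the indicator of a rank-`k` block, `k ≤ n`. -/
lemma sum_ind_le {k n x y : ℕ} (hkn : k ≤ n) (c : ℂ) :
    ∑ w ∈ block p n x, (if w / p ^ k = y / p ^ k then c else 0)
      = if y / p ^ n = x / p ^ n then (p : ℂ) ^ k * c else 0 := by
  have : ∀ w, (if w / p ^ k = y / p ^ k then c else 0)
      = if w ∈ block p k y then c else 0 := by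
    intro w; simp [mem_block_iff hp]
  simp only [this]
  rw [Finset.sum_ite_mem]
  have hinter : block p n x ∩ block p k y
      = if y / p ^ n = x / p ^ n then block p k y else ∅ := by
    split_ifs with hyx
    · ext w
      simp only [Finset.mem_inter, mem_block_iff hp, and_iff_right_iff_imp]
      intro hw
      exact (div_congr_of_le hp hkn hw).trans hyx
    · ext w
      simp only [Finset.mem_inter, mem_block_iff hp, Finset.notMem_empty, iff_false]
      rintro ⟨h1, h2⟩
      exact hyx ((div_congr_of_le hp hkn h2).symm.trans h1)
  rw [hinter]
  split_ifs with hyx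
  · rw [Finset.sum_const, card_block hp, nsmul_eq_mul]; push_cast; ring
  · simp

/-- sum over a rank-`n` block of the indicator of a rank-`k` block, `n ≤ k`. -/
lemma sum_ind_ge {k n x y : ℕ} (hnk : n ≤ k) (c : ℂ) :
    ∑ w ∈ block p n x, (if w / p ^ k = y / p ^ k then c else 0)
      = if x / p ^ k = y / p ^ k then (p : ℂ) ^ n * c else 0 := by
  have : ∀ w ∈ block p n x, (if w / p ^ k = y / p ^ k then c else 0)
      = if x / p ^ k = y / p ^ k then c else 0 := by
    intro w hw
    have hwx : w / p ^ k = x / p ^ k :=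
      div_congr_of_le hp hnk ((mem_block_iff hp).1 hw)
    rw [hwx]
  rw [Finset.sum_congr rfl this, Finset.sum_const, card_block hp, nsmul_eq_mul]
  push_cast
  split_ifs <;> ring

end blocks

/-- `Phi p y n` is `p^{-n}` times the indicator of the rank-`n` block of `y`, as an `ℓ²` vector. -/
noncomputable def Phi (p y n : ℕ) : lp (fun _ : ℕ => ℂ) 2 :=
  ∑ w ∈ block p n y, lp.single 2 w (((p : ℂ) ^ n)⁻¹)

/-- `Vv p y s = Phi p y s - Phi p y (s+1)` is the spectral component of `δ_y` at eigenvalue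
`κ^s`. -/
noncomputable def Vv (p y s : ℕ) : lp (fun _ : ℕ => ℂ) 2 := Phi p y s - Phi p y (s + 1)

section phi
set_option linter.unusedSectionVars false
variable {p : ℕ} (hp : 2 ≤ p)
include hp

lemma Phi_apply (y n x : ℕ) :
    Phi p y n x = if x / p ^ n = y / p ^ n then ((p : ℂ) ^ n)⁻¹ else 0 := by
  have h1 : Phi p y n x = if x ∈ block p n y then ((p : ℂ) ^ n)⁻¹ else 0 := by
    rw [Phi]
    simp only [lp.coeFn_sum, Finset.sum_apply, lp.single_apply]
    rw [Finset.sum_pi_single]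
  rw [h1]
  congr 1
  simp [mem_block_iff hp]

lemma norm_Phi (y n : ℕ) : ‖Phi p y n‖ = ((Real.sqrt p)⁻¹) ^ n := by
  have h2 : (0:ℝ) < (2 : ENNReal).toReal := by norm_num
  have := lp.norm_sum_single (E := fun _ : ℕ => ℂ) h2
    (fun _ => ((p : ℂ) ^ n)⁻¹) (block p n y)
  rw [show ((2 : ENNReal).toReal) = (2:ℝ) by norm_num] at this
  have hp0 : (0:ℝ) < (p:ℝ) := by positivity
  have hnorm : ‖((p : ℂ) ^ n)⁻¹‖ = ((p:ℝ) ^ n)⁻¹ := by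
    rw [norm_inv, norm_pow, Complex.norm_natCast]
  rw [Finset.sum_const, card_block hp, hnorm, nsmul_eq_mul] at this
  have key : ‖Phi p y n‖ ^ (2:ℝ) = (((Real.sqrt p)⁻¹) ^ n) ^ (2:ℝ) := by
    rw [Phi, this]
    rw [Real.rpow_two, Real.rpow_two]
    have h3 : ((Real.sqrt (p:ℝ))⁻¹ ^ n) ^ 2 = ((p:ℝ) ^ n)⁻¹ := by
      rw [← pow_mul, inv_pow, mul_comm n 2, pow_mul, Real.sq_sqrt hp0.le]
    rw [h3]
    push_cast
    rw [sq, ← mul_assoc, mul_inv_cancel₀ (by positivity), one_mul]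
  have h1 : (0:ℝ) ≤ ‖Phi p y n‖ := norm_nonneg _
  have h2' : (0:ℝ) ≤ ((Real.sqrt p)⁻¹) ^ n := by positivity
  rw [Real.rpow_two, Real.rpow_two] at key
  nlinarith [sq_nonneg (‖Phi p y n‖ - ((Real.sqrt p)⁻¹) ^ n),
    sq_nonneg (‖Phi p y n‖ + ((Real.sqrt p)⁻¹) ^ n)]

lemma sqrtp_inv_lt_one : (Real.sqrt p)⁻¹ < 1 := by
  have : (1:ℝ) < Real.sqrt p := by
    have : (1:ℝ) < (p:ℝ) := by exact_mod_cast (by omega : 1 < p)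
    calc (1:ℝ) = Real.sqrt 1 := (Real.sqrt_one).symm
    _ < Real.sqrt p := Real.sqrt_lt_sqrt zero_le_one this
  rw [inv_lt_one_iff₀]; right; exact this

lemma norm_Vv_le (y s : ℕ) : ‖Vv p y s‖ ≤ 2 * ((Real.sqrt p)⁻¹) ^ s := by
  have h1 := norm_Phi hp y s
  have h2 := norm_Phi hp y (s + 1)
  have h3 : ((Real.sqrt p)⁻¹) ^ (s+1) ≤ ((Real.sqrt p)⁻¹) ^ s := by
    apply pow_le_pow_of_le_one (by positivity) (sqrtp_inv_lt_one hp).le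
    omega
  calc ‖Vv p y s‖ ≤ ‖Phi p y s‖ + ‖Phi p y (s+1)‖ := norm_sub_le _ _
  _ ≤ 2 * ((Real.sqrt p)⁻¹) ^ s := by rw [h1, h2]; linarith

lemma Vv_apply (y s x : ℕ) :
    Vv p y s x = (if x / p ^ s = y / p ^ s then ((p : ℂ) ^ s)⁻¹ else 0)
      - (if x / p ^ (s+1) = y / p ^ (s+1) then ((p : ℂ) ^ (s+1))⁻¹ else 0) := by
  rw [Vv]
  rw [lp.coeFn_sub, Pi.sub_apply, Phi_apply hp, Phi_apply hp]

/-- `Vv p y s` is constant on blocks of rank `≤ s`; hence block sums below rank `s`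
reproduce the value. -/
lemma sum_Vv_lt {s m : ℕ} (y x : ℕ) (hms : m + 1 ≤ s) :
    ∑ w ∈ block p (m+1) x, Vv p y s w = (p : ℂ) ^ (m+1) * Vv p y s x := by
  simp only [Vv_apply hp]
  rw [Finset.sum_sub_distrib]
  rw [sum_ind_ge hp (by omega), sum_ind_ge hp (by omega)]
  rw [mul_sub]
  congr 1 <;> rw [mul_ite, mul_zero]

/-- `Vv p y s` has zero sum over blocks of rank `≥ s+1`. -/
lemma sum_Vv_ge {s n : ℕ} (y x : ℕ) (hsn : s + 1 ≤ n) :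
    ∑ w ∈ block p n x, Vv p y s w = 0 := by
  simp only [Vv_apply hp]
  rw [Finset.sum_sub_distrib]
  rw [sum_ind_le hp (by omega), sum_ind_le hp (by omega)]
  have hne : (p:ℂ) ≠ 0 := by exact_mod_cast (by omega : p ≠ 0)
  split_ifs with h
  · rw [mul_inv_cancel₀ (pow_ne_zero _ hne), mul_inv_cancel₀ (pow_ne_zero _ hne), sub_self]
  · simp

end phi

section eig
set_option linter.unusedSectionVars false
variable {p : ℕ} (hp : 2 ≤ p) {α : ℝ} (hα : 0 < α)
include hp hα

lemma kappa_pos : 0 < kappa p α := Real.rpow_pos_of_pos (by positivity) _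

lemma kappa_lt_one : kappa p α < 1 := by
  apply Real.rpow_lt_one_of_one_lt_of_neg
  · exact_mod_cast (by omega : 1 < p)
  · linarith

lemma D_Vv {D : lp (fun _ : ℕ => ℂ) 2 →L[ℂ] lp (fun _ : ℕ => ℂ) 2}
    (hD : IsDyson p α D) (y s : ℕ) :
    D (Vv p y s) = (((kappa p α ^ s : ℝ) : ℂ)) • Vv p y s := by
  set κ : ℝ := kappa p α with hκ
  have hκ0 : 0 < κ := kappa_pos hp hα
  have hκ1 : κ < 1 := kappa_lt_one hp hα
  apply lp.ext
  funext x
  rw [lp.coeFn_smul, Pi.smul_apply, hD (Vv p y s) x]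
  set v : ℂ := Vv p y s x with hv
  have hterm : ∀ m : ℕ, (((1 - κ) * κ ^ m : ℝ) : ℂ) *
      ((Vv p y s) x - ((p : ℂ) ^ (m + 1))⁻¹ * ∑ w ∈ block p (m + 1) x, (Vv p y s) w)
      = if s ≤ m then (((1 - κ) * κ ^ m : ℝ) : ℂ) * v else 0 := by
    intro m
    rcases lt_or_ge m s with hms | hsm
    · rw [if_neg (by omega)]
      rw [sum_Vv_lt hp y x (by omega)]
      have hne : (p:ℂ) ≠ 0 := by exact_mod_cast (by omega : p ≠ 0)
      rw [inv_mul_cancel_left₀ (pow_ne_zero _ hne), ← hv, sub_self, mul_zero]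
    · rw [if_pos hsm]
      rw [sum_Vv_ge hp y x (by omega)]
      rw [mul_zero, sub_zero]
  rw [tsum_congr hterm]
  have hκc1 : ((1:ℂ) - (κ:ℂ)) ≠ 0 := by
    intro h
    have : (κ:ℂ) = 1 := by linear_combination -h
    rw [show (1:ℂ) = ((1:ℝ):ℂ) by norm_num] at this
    exact absurd (Complex.ofReal_injective this) (by linarith)
  have hgeo : HasSum (fun j : ℕ => ((κ:ℂ)) ^ j) (1 - (κ:ℂ))⁻¹ := by
    apply hasSum_geometric_of_norm_lt_one
    rw [Complex.norm_real, Real.norm_eq_abs, abs_of_pos hκ0]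
    exact hκ1
  have hsum : HasSum (fun m : ℕ => if s ≤ m then (((1 - κ) * κ ^ m : ℝ) : ℂ) * v else 0)
      (((κ ^ s : ℝ) : ℂ) * v) := by
    rw [← (hasSum_nat_add_iff' s)]
    have hzero : ∑ i ∈ Finset.range s,
        (if s ≤ i then (((1 - κ) * κ ^ i : ℝ) : ℂ) * v else 0) = 0 := by
      apply Finset.sum_eq_zero
      intro i hi
      rw [Finset.mem_range] at hi
      rw [if_neg (by omega)]
    rw [hzero, sub_zero]
    have heq : ∀ j : ℕ, (if s ≤ j + s then (((1 - κ) * κ ^ (j + s) : ℝ) : ℂ) * v else 0)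
        = ((κ:ℂ)) ^ j * ((1 - (κ:ℂ)) * ((κ ^ s : ℝ) : ℂ) * v) := by
      intro j
      rw [if_pos (by omega)]
      push_cast
      ring
    have := hgeo.mul_right ((1 - (κ:ℂ)) * ((κ ^ s : ℝ) : ℂ) * v)
    rw [show (1 - (κ:ℂ))⁻¹ * ((1 - (κ:ℂ)) * ((κ ^ s : ℝ) : ℂ) * v)
        = ((κ ^ s : ℝ) : ℂ) * v by field_simp] at this
    exact (funext heq) ▸ this
  rw [hsum.tsum_eq]
  rfl

end eig

section spec
set_option linter.unusedSectionVars false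
variable {p : ℕ} (hp : 2 ≤ p) {α : ℝ} (hα : 0 < α)
include hp hα

lemma Vv_ne_zero (y s : ℕ) : Vv p y s ≠ 0 := by
  intro h
  have h1 : Vv p y s y = 0 := by rw [h]; rfl
  rw [Vv_apply hp, if_pos rfl, if_pos rfl] at h1
  have hne : (p:ℂ) ≠ 0 := by exact_mod_cast (by omega : p ≠ 0)
  have h2 : ((p:ℂ) ^ s)⁻¹ = ((p:ℂ) ^ (s+1))⁻¹ := by linear_combination h1
  have h3 : (p:ℂ) ^ s = (p:ℂ) ^ (s+1) := inv_inj.mp h2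
  have h4 : (1:ℂ) = (p:ℂ) := by
    apply mul_left_cancel₀ (pow_ne_zero s hne)
    rw [mul_one, ← pow_succ]
    exact h3
  have : (p:ℂ) ≠ 1 := by
    intro hh
    have : ((p:ℕ):ℂ) = ((1:ℕ):ℂ) := by push_cast; exact hh
    have := Nat.cast_injective (R := ℂ) this
    omega
  exact this h4.symm

lemma kappa_pow_mem_spectrum {D : lp (fun _ : ℕ => ℂ) 2 →L[ℂ] lp (fun _ : ℕ => ℂ) 2}
    (hD : IsDyson p α D) (y s : ℕ) :
    (((kappa p α ^ s : ℝ) : ℂ)) ∈ spectrum ℂ D := by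
  by_contra h
  rw [spectrum.notMem_iff] at h
  set c : ℂ := ((kappa p α ^ s : ℝ) : ℂ)
  set u : lp (fun _ : ℕ => ℂ) 2 →L[ℂ] lp (fun _ : ℕ => ℂ) 2 := algebraMap ℂ _ c - D with hu
  have huv : u (Vv p y s) = 0 := by
    rw [hu, ContinuousLinearMap.sub_apply, Algebra.algebraMap_eq_smul_one,
      ContinuousLinearMap.smul_apply, ContinuousLinearMap.one_apply, D_Vv hp hα hD,
      sub_self]
  have hinv : ((↑h.unit⁻¹ : lp (fun _ : ℕ => ℂ) 2 →L[ℂ] lp (fun _ : ℕ => ℂ) 2) * u) = 1 := by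
    have h5 := h.unit.inv_mul
    rwa [h.unit_spec] at h5
  have hz : Vv p y s = 0 := by
    have h5 : ((↑h.unit⁻¹ : lp (fun _ : ℕ => ℂ) 2 →L[ℂ] lp (fun _ : ℕ => ℂ) 2) * u) (Vv p y s)
        = Vv p y s := by rw [hinv]; rfl
    rw [ContinuousLinearMap.mul_apply, huv, map_zero] at h5
    exact h5.symm
  exact Vv_ne_zero hp hα y s hz

end spec

/-- evaluation at a point, as a continuous linear functional on `ℓ²`. -/
noncomputable def evalCLM (x : ℕ) : lp (fun _ : ℕ => ℂ) 2 →L[ℂ] ℂ :=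
  LinearMap.mkContinuous
    { toFun := fun f => f x
      map_add' := fun f g => congrFun (lp.coeFn_add f g) x
      map_smul' := fun c f => congrFun (lp.coeFn_smul c f) x }
    1 (fun f => by
      rw [one_mul]
      exact lp.norm_apply_le_norm (by norm_num) f x)

lemma evalCLM_apply (x : ℕ) (f : lp (fun _ : ℕ => ℂ) 2) : evalCLM x f = f x := rfl

section hassum
set_option linter.unusedSectionVars false
variable {p : ℕ} (hp : 2 ≤ p)
include hp

lemma summable_Vv (y : ℕ) : Summable (fun s => Vv p y s) := by
  apply Summable.of_norm_bounded (g := fun s => 2 * ((Real.sqrt p)⁻¹) ^ s)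
  · exact (summable_geometric_of_lt_one (by positivity) (sqrtp_inv_lt_one hp)).mul_left 2
  · exact norm_Vv_le hp y

lemma Phi_zero_eq (y : ℕ) : Phi p y 0 = lp.single 2 y 1 := by
  have hb : block p 0 y = {y} := by
    rw [block, pow_zero, Nat.div_one, mul_one, mul_one, Nat.Ico_succ_singleton]
  rw [Phi, hb, Finset.sum_singleton, pow_zero, inv_one]

lemma hasSum_Vv (y : ℕ) : HasSum (fun s => Vv p y s) (lp.single 2 y 1) := by
  obtain ⟨L, hL⟩ := summable_Vv hp y
  have h1 := hL.tendsto_sum_nat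
  have h2 : ∀ N, ∑ s ∈ Finset.range N, Vv p y s = Phi p y 0 - Phi p y N := by
    intro N
    exact Finset.sum_range_sub' (Phi p y) N
  rw [funext h2] at h1
  have h3 : Filter.Tendsto (fun N => Phi p y 0 - Phi p y N) Filter.atTop
      (nhds (Phi p y 0 - 0)) := by
    apply Filter.Tendsto.const_sub
    apply squeeze_zero_norm (fun N => (norm_Phi hp y N).le)
    exact tendsto_pow_atTop_nhds_zero_of_lt_one (by positivity) (sqrtp_inv_lt_one hp)
  have h4 : L = Phi p y 0 - 0 := tendsto_nhds_unique h1 h3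
  rw [h4, sub_zero, Phi_zero_eq hp] at hL
  exact hL

end hassum

theorem stmt_7 (p : ℕ) (hp : 2 ≤ p) (α : ℝ) (hα : 0 < α)
    (D : lp (fun _ : ℕ => ℂ) 2 →L[ℂ] lp (fun _ : ℕ => ℂ) 2)
    (hDsa : IsSelfAdjoint D) (hD : IsDyson p α D)
    (x y : ℕ) (hxy : x ≠ y) (r : ℕ)
    -- `r ≥ 1` is the least positive integer with `⌊x / p^r⌋ = ⌊y / p^r⌋`
    (hr : IsLeast {s : ℕ | 1 ≤ s ∧ x / p ^ s = y / p ^ s} r)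
    (z : ℂ) (hz : z ∉ spectrum ℂ D) :
    -- `R(z, x, y) = -p^(-r)/(κ^(r-1) - z) + (p - 1) Σ_{k ≥ r+1} p^(-k)/(κ^(k-1) - z)`,
    -- i.e. the series `Σ_{k ≥ r+1}` (with `k = r + 1 + j`) converges, with sum
    -- `R(z, x, y) + p^(-r)/(κ^(r-1) - z)`
    HasSum (fun j : ℕ => ((p : ℂ) - 1) *
        (((p : ℂ) ^ (r + 1 + j))⁻¹ / (((kappa p α ^ (r + j) : ℝ) : ℂ) - z)))
      (Ring.inverse (D - z • 1) (lp.single 2 y 1) x +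
        ((p : ℂ) ^ r)⁻¹ / (((kappa p α ^ (r - 1) : ℝ) : ℂ) - z)) := by
  have hpC : (p:ℂ) ≠ 0 := by exact_mod_cast (by omega : p ≠ 0)
  set κc : ℕ → ℂ := fun s => ((kappa p α ^ s : ℝ) : ℂ) with hκc
  -- distance from z to the spectrum
  set ε : ℝ := Metric.infDist z (spectrum ℂ D) with hε
  have hspec : ∀ s, κc s ∈ spectrum ℂ D := fun s => kappa_pow_mem_spectrum hp hα hD y s
  have hnonempty : (spectrum ℂ D).Nonempty := ⟨κc 0, hspec 0⟩
  have hεpos : 0 < ε := by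
    rw [hε]
    exact ((spectrum.isClosed (𝕜 := ℂ) D).notMem_iff_infDist_pos hnonempty).1 hz
  have hlow : ∀ s, ε ≤ ‖κc s - z‖ := by
    intro s
    have h1 : ε ≤ dist z (κc s) := Metric.infDist_le_dist_of_mem (hspec s)
    rw [dist_comm, dist_eq_norm] at h1
    exact h1
  have hne0 : ∀ s, κc s - z ≠ 0 := by
    intro s h
    have := hlow s
    rw [h, norm_zero] at this
    linarith
  set cs : ℕ → ℂ := fun s => (κc s - z)⁻¹ with hcs
  have hcsnorm : ∀ s, ‖cs s‖ ≤ ε⁻¹ := by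
    intro s
    rw [hcs]
    simp only [norm_inv]
    exact inv_anti₀ hεpos (hlow s)
  -- the resolvent applied to δ_y
  set F : ℕ → lp (fun _ : ℕ => ℂ) 2 := fun s => cs s • Vv p y s with hF
  have hFs : Summable F := by
    apply Summable.of_norm_bounded (g := fun s => ε⁻¹ * (2 * ((Real.sqrt p)⁻¹) ^ s))
    · exact ((summable_geometric_of_lt_one (by positivity)
        (sqrtp_inv_lt_one hp)).mul_left 2).mul_left ε⁻¹
    · intro s
      rw [hF]
      simp only [norm_smul]
      exact mul_le_mul (hcsnorm s) (norm_Vv_le hp y s) (norm_nonneg _) (by positivity)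
  set g : lp (fun _ : ℕ => ℂ) 2 := ∑' s, F s with hg
  have hgsum : HasSum F g := hFs.hasSum
  -- (D - z•1) g = δ_y
  have hDFs : ∀ s, (D - z • 1) (F s) = Vv p y s := by
    intro s
    rw [hF]
    simp only [map_smul]
    rw [ContinuousLinearMap.sub_apply, ContinuousLinearMap.smul_apply,
      ContinuousLinearMap.one_apply, D_Vv hp hα hD, ← sub_smul, smul_smul,
      inv_mul_cancel₀ (hne0 s), one_smul]
  have hDg : (D - z • 1) g = lp.single 2 y 1 := by
    have h1 : HasSum (fun s => (D - z • 1) (F s)) ((D - z • 1) g) := hgsum.mapL _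
    rw [funext hDFs] at h1
    exact (tendsto_nhds_unique h1.tendsto_sum_nat (hasSum_Vv hp y).tendsto_sum_nat ▸ h1 :
      HasSum _ _).unique (hasSum_Vv hp y)
  -- hence the resolvent kernel at (x,y) is g x
  have hu : IsUnit (D - z • 1) := by
    have h1 := spectrum.notMem_iff.mp hz
    have h2 : D - z • 1 = -(algebraMap ℂ _ z - D) := by
      rw [Algebra.algebraMap_eq_smul_one, neg_sub]
    rw [h2]
    exact h1.neg
  have hRg : Ring.inverse (D - z • 1) (lp.single 2 y 1) = g := by
    rw [← hDg, ← ContinuousLinearMap.mul_apply, Ring.inverse_mul_cancel _ hu,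
      ContinuousLinearMap.one_apply]
  -- evaluate at x
  have hgx : HasSum (fun s => cs s * Vv p y s x) (g x) := by
    have h1 : HasSum (fun s => evalCLM x (F s)) (evalCLM x g) := hgsum.mapL _
    have h2 : ∀ s, evalCLM x (F s) = cs s * Vv p y s x := by
      intro s
      rw [evalCLM_apply, hF]
      simp only [lp.coeFn_smul, Pi.smul_apply, smul_eq_mul]
    rw [funext h2] at h1
    exact h1
  -- the values of Vv at x
  have hr1 : 1 ≤ r := hr.1.1
  have hdiv : ∀ n, x / p ^ n = y / p ^ n ↔ r ≤ n := by
    intro n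
    constructor
    · intro h
      rcases Nat.eq_zero_or_pos n with hn | hn
      · subst hn
        rw [pow_zero, Nat.div_one, Nat.div_one] at h
        exact absurd h hxy
      · exact hr.2 ⟨hn, h⟩
    · intro h
      exact div_congr_of_le hp h hr.1.2
  have hVvx : ∀ s, Vv p y s x = (if r ≤ s then ((p : ℂ) ^ s)⁻¹ else 0)
      - (if r ≤ s + 1 then ((p : ℂ) ^ (s+1))⁻¹ else 0) := by
    intro s
    rw [Vv_apply hp]
    simp only [hdiv]
  -- shift the series by r
  set f : ℕ → ℂ := fun s => cs s * Vv p y s x with hf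
  have hshift : HasSum (fun j => f (j + r)) (g x - ∑ i ∈ Finset.range r, f i) :=
    (hasSum_nat_add_iff' r).mpr hgx
  have hsum_range : ∑ i ∈ Finset.range r, f i = cs (r-1) * (-((p:ℂ) ^ r)⁻¹) := by
    rw [Finset.sum_eq_single (r-1)]
    · rw [hf]
      simp only
      rw [hVvx, if_neg (by omega), if_pos (by omega), zero_sub]
      have hre : r - 1 + 1 = r := by omega
      rw [hre]
    · intro i hi hine
      rw [Finset.mem_range] at hi
      rw [hf]
      simp only
      rw [hVvx, if_neg (by omega), if_neg (by omega), sub_zero, mul_zero]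
    · intro h
      exfalso
      rw [Finset.mem_range] at h
      omega
  -- identify the shifted series with the target series
  have hfun : ∀ j : ℕ, ((p : ℂ) - 1) *
      (((p : ℂ) ^ (r + 1 + j))⁻¹ / (((kappa p α ^ (r + j) : ℝ) : ℂ) - z)) = f (j + r) := by
    intro j
    rw [hf]
    simp only
    rw [hVvx, if_pos (by omega), if_pos (by omega)]
    have hjr : j + r = r + j := by omega
    rw [hjr]
    have hpow : ((p:ℂ) ^ (r + j))⁻¹ - ((p:ℂ) ^ (r + j + 1))⁻¹
        = ((p:ℂ) - 1) * ((p:ℂ) ^ (r + 1 + j))⁻¹ := by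
      have h1 : r + 1 + j = (r + j) + 1 := by omega
      rw [h1, pow_succ]
      field_simp
    rw [hpow, hcs, div_eq_mul_inv]
    ring
  rw [funext hfun]
  have hfinal : g x - ∑ i ∈ Finset.range r, f i
      = Ring.inverse (D - z • 1) (lp.single 2 y 1) x +
        ((p : ℂ) ^ r)⁻¹ / (((kappa p α ^ (r - 1) : ℝ) : ℂ) - z) := by
    rw [hsum_range, hRg, hcs, div_eq_mul_inv]
    ring
  rw [← hfinal]
  exact hshift
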